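/- arXiv:1803.07351 — 2 statements merged into one kernel-verified Lean document; each statement's English description precedes it below -/
import Mathlib

section
/- An edge labeling x : E → {0,1} of a finite graph G is a multicut (no cycle contains exactly one active edge) if and only if there exists a partition of V such that x_e = 1 exactly when the endpoints of e lie in different blocks of the partition, where each block is connected in the subgraph of dormant edges. -/
/-- A cycle in a graph with edge-endpoint maps `hd`, `tl`: vertices `v 0, ..., v n` with
`v n = v 0`, pairwise-distinct vertices `v 0, ..., v (n-1)`, pairwise-distinct edges, and
the `i`-th edge joining `v i` and `v (i+1)` (in either orientation). -/
def IsCycle {V E : Type} (hd tl : E → V) {n : ℕ} (v : Fin (n + 1) → V) (c : Fin n → E) : Prop :=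
  0 < n ∧ v (Fin.last n) = v 0 ∧
  Function.Injective (fun i : Fin n => v i.castSucc) ∧
  Function.Injective c ∧
  ∀ i : Fin n, (hd (c i) = v i.castSucc ∧ tl (c i) = v i.succ) ∨
               (tl (c i) = v i.castSucc ∧ hd (c i) = v i.succ)

/-- The number of active edges (`x e = 1`) among the edges of a cycle. -/
def activeCount {E : Type} (x : E → ℕ) {n : ℕ} (c : Fin n → E) : ℕ :=
  (Finset.univ.filter (fun i : Fin n => x (c i) = 1)).card

/-- `x` is a multicut: no cycle contains exactly one active edge. -/
def IsMulticut {V E : Type} (hd tl : E → V) (x : E → ℕ) : Prop :=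
  ∀ (n : ℕ) (v : Fin (n + 1) → V) (c : Fin n → E), IsCycle hd tl v c → activeCount x c ≠ 1

/-- Adjacency via a dormant edge (`x e = 0`). -/
def DormantAdj {V E : Type} (hd tl : E → V) (x : E → ℕ) (u v' : V) : Prop :=
  ∃ e, x e = 0 ∧ ((hd e = u ∧ tl e = v') ∨ (tl e = u ∧ hd e = v'))


/-!
If `x` is a multicut, the connected components of the dormant subgraph form the required
partition: an active edge inside a component would close, together with an injective dormant
path between its endpoints, a cycle with exactly one active edge. Conversely, along a cycle the
block of the current vertex changes only across active edges, and a closed walk cannot change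
block exactly once.
-/

open Function Relation

section

variable {V E : Type} {hd tl : E → V} {x : E → ℕ}

-- The incidence clauses of `IsCycle` and `DormantAdj` unfold to `Joins`.
def Joins (hd tl : E → V) (e : E) (a b : V) : Prop :=
  (hd e = a ∧ tl e = b) ∨ (tl e = a ∧ hd e = b)

lemma Joins.symm {e : E} {a b : V} (h : Joins hd tl e a b) : Joins hd tl e b a :=
  (Or.symm h).imp (fun h => ⟨h.2, h.1⟩) (fun h => ⟨h.2, h.1⟩)

lemma Joins.apply_eq_iff {ι : Type} {f : V → ι} {e : E} {a b : V} (h : Joins hd tl e a b) :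
    f a = f b ↔ f (hd e) = f (tl e) := by
  rcases h with ⟨rfl, rfl⟩ | ⟨rfl, rfl⟩
  exacts [Iff.rfl, eq_comm]

lemma injective_of_forall_joins {m : ℕ} {u : Fin (m + 1) → V} {e : Fin m → E} (hu : Injective u)
    (he : ∀ i, Joins hd tl (e i) (u i.castSucc) (u i.succ)) : Injective e := by
  intro i j hij
  have hi := he i
  rw [hij] at hi
  rcases hi with ⟨h1, h2⟩ | ⟨h1, h2⟩ <;> rcases he j with ⟨h3, h4⟩ | ⟨h3, h4⟩
  · exact Fin.castSucc_injective _ (hu (h1.symm.trans h3))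
  · have k1 := hu (h1.symm.trans h4)
    have k2 := hu (h2.symm.trans h3)
    simp only [Fin.ext_iff, Fin.val_castSucc, Fin.val_succ] at k1 k2
    omega
  · have k1 := hu (h1.symm.trans h4)
    have k2 := hu (h2.symm.trans h3)
    simp only [Fin.ext_iff, Fin.val_castSucc, Fin.val_succ] at k1 k2
    omega
  · exact Fin.castSucc_injective _ (hu (h1.symm.trans h3))

lemma DormantAdj.symm {u w : V} (h : DormantAdj hd tl x u w) : DormantAdj hd tl x w u :=
  let ⟨e, he, hj⟩ := h
  ⟨e, he, Joins.symm hj⟩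

def dormantGraph (hd tl : E → V) (x : E → ℕ) : SimpleGraph V :=
  SimpleGraph.fromEdgeSet (Sym2.fromRel (r := DormantAdj hd tl x) ⟨fun _ _ => DormantAdj.symm⟩)

lemma dormantGraph_reachable :
    (dormantGraph hd tl x).Reachable = ReflTransGen (DormantAdj hd tl x) :=
  SimpleGraph.reachable_fromEdgeSet_fromRel_eq_reflTransGen _

lemma dormantAdj_of_dormantGraph_adj {u w : V} (h : (dormantGraph hd tl x).Adj u w) :
    DormantAdj hd tl x u w :=
  Sym2.fromRel_prop.1 ((SimpleGraph.fromEdgeSet_adj _).1 h).1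

lemma exists_dormant_path {a b : V} (h : ReflTransGen (DormantAdj hd tl x) a b) :
    ∃ (m : ℕ) (u : Fin (m + 1) → V) (e : Fin m → E), Injective u ∧ u 0 = a ∧
      u (Fin.last m) = b ∧ ∀ i, x (e i) = 0 ∧ Joins hd tl (e i) (u i.castSucc) (u i.succ) := by
  rw [← dormantGraph_reachable] at h
  obtain ⟨p, hp⟩ := h.exists_isPath
  have hstep (i : Fin p.length) : DormantAdj hd tl x (p.getVert i) (p.getVert (i + 1)) :=
    dormantAdj_of_dormantGraph_adj (p.adj_getVert_succ i.isLt)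
  choose e he using hstep
  refine ⟨p.length, fun i => p.getVert i, e, fun i j hij => ?_, p.getVert_zero,
    p.getVert_length, he⟩
  exact Fin.ext (hp.getVert_injOn (Nat.lt_succ_iff.1 i.isLt) (Nat.lt_succ_iff.1 j.isLt) hij)

lemma isCycle_snoc {m : ℕ} {u : Fin (m + 1) → V} {e : Fin m → E} {e₀ : E} (hu : Injective u)
    (he : ∀ i, Joins hd tl (e i) (u i.castSucc) (u i.succ))
    (he₀ : Joins hd tl e₀ (u (Fin.last m)) (u 0)) (hne : e₀ ∉ Set.range e) :
    IsCycle hd tl (Fin.snoc u (u 0) : Fin (m + 2) → V) (Fin.snoc e e₀ : Fin (m + 1) → E) := by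
  refine ⟨m.succ_pos, ?_, ?_, Fin.snoc_injective_of_injective (injective_of_forall_joins hu he) hne,
    fun i => ?_⟩
  · rw [Fin.snoc_last]
    exact (Fin.snoc_castSucc (α := fun _ => V) (i := 0) ..).symm
  · simpa only [Fin.snoc_castSucc] using hu
  · induction i using Fin.lastCases with
    | last =>
      rw [Fin.snoc_last, Fin.snoc_castSucc, Fin.succ_last, Fin.snoc_last]
      exact he₀
    | cast j =>
      rw [Fin.snoc_castSucc, Fin.snoc_castSucc, Fin.succ_castSucc, Fin.snoc_castSucc]
      exact he j

lemma activeCount_eq_one_iff {n : ℕ} (c : Fin n → E) :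
    activeCount x c = 1 ↔ ∃ i₀, ∀ i, x (c i) = 1 ↔ i = i₀ := by
  simp only [activeCount, Finset.card_eq_one, Finset.ext_iff, Finset.mem_filter, Finset.mem_univ,
    true_and, Finset.mem_singleton]

lemma apply_castSucc_eq_apply_succ_of_forall_ne {ι : Type} {n : ℕ} (g : Fin (n + 1) → ι)
    (hclosed : g (Fin.last n) = g 0) (i₀ : Fin n)
    (hstep : ∀ i, i ≠ i₀ → g i.castSucc = g i.succ) : g i₀.castSucc = g i₀.succ := by
  have before (i : Fin (n + 1)) : i ≤ i₀.castSucc → g i = g 0 := by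
    induction i using Fin.induction with
    | zero => exact fun _ => rfl
    | succ j ih =>
      intro hj
      have hlt : j < i₀ := Fin.succ_le_castSucc_iff.1 hj
      rw [← hstep j hlt.ne, ih (Fin.castSucc_le_castSucc_iff.2 hlt.le)]
  have after (i : Fin (n + 1)) : i₀.succ ≤ i → g i = g (Fin.last n) := by
    induction i using Fin.reverseInduction with
    | last => exact fun _ => rfl
    | cast j ih =>
      intro hj
      have hlt : i₀ < j := Fin.succ_le_castSucc_iff.1 hj
      rw [hstep j hlt.ne', ih (Fin.succ_le_succ_iff.2 hlt.le)]
  rw [before _ le_rfl, ← hclosed, after _ le_rfl]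

lemma IsMulticut.not_reflTransGen (hmc : IsMulticut hd tl x) {e₀ : E} (h₁ : x e₀ = 1) :
    ¬ ReflTransGen (DormantAdj hd tl x) (hd e₀) (tl e₀) := by
  intro hR
  obtain ⟨m, u, e, hu, hu0, hum, he⟩ := exists_dormant_path hR
  have hne : e₀ ∉ Set.range e := by
    rintro ⟨i, rfl⟩
    exact absurd h₁ (by simp [(he i).1])
  refine hmc (m + 1) _ _ (isCycle_snoc hu (fun i => (he i).2) (Or.inr ⟨hum.symm, hu0.symm⟩) hne)
    ((activeCount_eq_one_iff _).2 ⟨Fin.last m, fun i => ?_⟩)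
  induction i using Fin.lastCases with
  | last => simpa [Fin.snoc_last] using h₁
  | cast j => simp [Fin.snoc_castSucc, (he j).1, (Fin.castSucc_lt_last j).ne]

lemma isMulticut_of_partition {ι : Type} (f : V → ι) (hf : ∀ e, x e = 1 ↔ f (hd e) ≠ f (tl e)) :
    IsMulticut hd tl x := by
  rintro n v c ⟨-, hclosed, -, -, hjoin⟩ hone
  obtain ⟨i₀, hi₀⟩ := (activeCount_eq_one_iff c).1 hone
  refine (hf (c i₀)).1 ((hi₀ i₀).2 rfl) ((Joins.apply_eq_iff (hjoin i₀)).1 ?_)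
  refine apply_castSucc_eq_apply_succ_of_forall_ne (f ∘ v) (congrArg f hclosed) i₀ fun i hi => ?_
  exact (Joins.apply_eq_iff (hjoin i)).2 (not_ne_iff.1 fun h => hi ((hi₀ i).1 ((hf _).2 h)))

end

theorem stmt4_general {V E : Type} (hd tl : E → V) (x : E → ℕ)
    (hbin : ∀ e, x e = 0 ∨ x e = 1) :
    IsMulticut hd tl x ↔
      ∃ (ι : Type) (f : V → ι),
        (∀ e, x e = 1 ↔ f (hd e) ≠ f (tl e)) ∧
        ∀ u v' : V, f u = f v' → Relation.ReflTransGen (DormantAdj hd tl x) u v' := by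
  refine ⟨fun hmc => ?_, fun ⟨ι, f, hf, _⟩ => isMulticut_of_partition f hf⟩
  have hcomp (u w : V) : (dormantGraph hd tl x).connectedComponentMk u =
      (dormantGraph hd tl x).connectedComponentMk w ↔ ReflTransGen (DormantAdj hd tl x) u w := by
    rw [SimpleGraph.ConnectedComponent.eq, dormantGraph_reachable]
  refine ⟨_, (dormantGraph hd tl x).connectedComponentMk, fun e => ?_, fun u w => (hcomp u w).1⟩
  rw [ne_eq, hcomp]
  refine ⟨hmc.not_reflTransGen, fun h => (hbin e).resolve_left fun h₀ => h ?_⟩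
  exact ReflTransGen.single ⟨e, h₀, Or.inl ⟨rfl, rfl⟩⟩

/-- A binary edge labeling is a multicut iff there is a partition of `V` (given by a
labeling `f`) such that `x_e = 1` exactly when the endpoints of `e` lie in different blocks,
and each block is connected in the subgraph of dormant edges. -/
theorem stmt4 {V E : Type} [Fintype V] (hd tl : E → V) (x : E → ℕ)
    (hbin : ∀ e, x e = 0 ∨ x e = 1) :
    IsMulticut hd tl x ↔
      ∃ (ι : Type) (f : V → ι),
        (∀ e, x e = 1 ↔ f (hd e) ≠ f (tl e)) ∧
        ∀ u v' : V, f u = f v' → Relation.ReflTransGen (DormantAdj hd tl x) u v' :=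
  stmt4_general hd tl x hbin
end

section
/- Let S_m be the set of multicut edge labelings of a finite graph G, and S_I^o the set of edge labelings x for which there exists w : V → ℝ with x_e = 1 ↔ w_{h_e} ≠ w_{t_e}. Then S_I^o = S_m. -/
/-! If `x` comes from a potential `w`, then around a cycle with a single active edge `w` is
constant across every other edge, so telescoping around the cycle makes it constant across the
active edge as well, a contradiction. Conversely, for a multicut let `w` label the connected
components of the graph of inactive edges injectively. An inactive edge stays inside one
component; an active edge `e` cannot, since a path of inactive edges from `tl e` to `hd e`,
closed up by `e`, would be a cycle with exactly one active edge. -/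

theorem Fin.sum_succ_sub_castSucc {M : Type*} [AddCommGroup M] :
    ∀ {n : ℕ} (g : Fin (n + 1) → M),
      ∑ i : Fin n, (g i.succ - g i.castSucc) = g (Fin.last n) - g 0
  | 0, g => by simp
  | n + 1, g => by
    rw [Fin.sum_univ_castSucc]
    simp only [Fin.succ_castSucc]
    rw [Fin.sum_succ_sub_castSucc fun i => g i.castSucc, Fin.succ_last, Fin.castSucc_zero]
    abel

theorem Fin.succ_eq_castSucc_of_forall_ne {M : Type*} [AddCommGroup M] {n : ℕ}
    (g : Fin (n + 1) → M) (i₀ : Fin n) (hg : ∀ i, i ≠ i₀ → g i.succ = g i.castSucc)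
    (hcl : g (Fin.last n) = g 0) : g i₀.succ = g i₀.castSucc := by
  have hsum := Fin.sum_succ_sub_castSucc g
  rw [Finset.sum_eq_single i₀ (fun i _ hi => sub_eq_zero.2 (hg i hi)) (by simp), hcl,
    sub_self] at hsum
  exact sub_eq_zero.1 hsum

theorem SimpleGraph.exists_eq_iff_reachable {V : Type*} [Countable V] (G : SimpleGraph V) :
    ∃ w : V → ℝ, ∀ a b, w a = w b ↔ G.Reachable a b := by
  have : Countable G.ConnectedComponent := Quotient.countable
  obtain ⟨f, hf⟩ := Countable.exists_injective_nat G.ConnectedComponent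
  refine ⟨fun v => f (G.connectedComponentMk v), fun a b => ?_⟩
  rw [Nat.cast_inj, hf.eq_iff, SimpleGraph.ConnectedComponent.eq]

theorem Set.InjOn.eq_of_sym2_mk_succ_eq {α : Type*} {g : ℕ → α} {m i j : ℕ}
    (hg : Set.InjOn g {k | k ≤ m}) (hi : i < m) (hj : j < m)
    (h : s(g i, g (i + 1)) = s(g j, g (j + 1))) : i = j := by
  rcases Sym2.eq_iff.1 h with ⟨h₁, -⟩ | ⟨h₁, h₂⟩
  · exact hg (show i ≤ m by omega) (show j ≤ m by omega) h₁
  · have := hg (show i ≤ m by omega) (show j + 1 ≤ m by omega) h₁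
    have := hg (show i + 1 ≤ m by omega) (show j ≤ m by omega) h₂
    omega

section Multicut

variable {V E : Type} {hd tl : E → V} {x : E → ℕ}

theorem isMulticut_of_forall_eq_one_iff_ne {M : Type*} [AddCommGroup M] (w : V → M)
    (hw : ∀ e, x e = 1 ↔ w (hd e) ≠ w (tl e)) : IsMulticut hd tl x := by
  rintro n v c ⟨-, hcl, -, -, hends⟩ hcount
  obtain ⟨i₀, hi₀⟩ := Finset.card_eq_one.1 hcount
  have hactive (i : Fin n) : x (c i) = 1 ↔ i = i₀ := by simpa using Finset.ext_iff.1 hi₀ i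
  have hstep (i : Fin n) : w (v i.succ) = w (v i.castSucc) ↔ x (c i) ≠ 1 := by
    rw [Ne, hw, not_not]
    rcases hends i with ⟨h₁, h₂⟩ | ⟨h₁, h₂⟩ <;> rw [h₁, h₂]
    exact eq_comm
  refine (hstep i₀).1 (Fin.succ_eq_castSucc_of_forall_ne (w ∘ v) i₀ (fun i hi => ?_) ?_)
    ((hactive i₀).2 rfl)
  · exact (hstep i).2 ((hactive i).not.2 hi)
  · simp [hcl]

theorem isCycle_of_injOn {n : ℕ} (g : ℕ → V) (f : ℕ → E) (hn : 0 < n) (hcl : g n = g 0)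
    (hg : Set.InjOn g {i | i < n}) (hf : Set.InjOn f {i | i < n})
    (hends : ∀ i < n, s(hd (f i), tl (f i)) = s(g i, g (i + 1))) :
    IsCycle hd tl (fun i : Fin (n + 1) => g i) (fun i : Fin n => f i) := by
  refine ⟨hn, hcl, fun i j h => Fin.ext (hg i.2 j.2 h), fun i j h => Fin.ext (hf i.2 j.2 h),
    fun i => ?_⟩
  rcases Sym2.eq_iff.1 (hends i i.2) with ⟨h₁, h₂⟩ | ⟨h₁, h₂⟩
  · exact .inl ⟨h₁, h₂⟩
  · exact .inr ⟨h₂, h₁⟩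

/-- Vertex indices are taken modulo `p.length + 1`, so that the last vertex wraps back to `u`. -/
theorem isCycle_of_isPath {G : SimpleGraph V} {u v : V} {p : G.Walk u v}
    (hp : p.IsPath) (f : ℕ → E)
    (hf : ∀ i < p.length, s(hd (f i), tl (f i)) = s(p.getVert i, p.getVert (i + 1)))
    (e : E) (he : s(hd e, tl e) = s(v, u)) (hfe : ∀ i < p.length, f i ≠ e) :
    IsCycle hd tl (fun i : Fin (p.length + 2) => p.getVert (i % (p.length + 1)))
      (fun i : Fin (p.length + 1) => if (i : ℕ) < p.length then f i else e) := by
  set m := p.length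
  have hg (i : ℕ) (hi : i ≤ m) : p.getVert (i % (m + 1)) = p.getVert i := by
    rw [Nat.mod_eq_of_lt (Nat.lt_succ_of_le hi)]
  refine isCycle_of_injOn (fun i => p.getVert (i % (m + 1))) (fun i => if i < m then f i else e)
    m.succ_pos (by simp) ?_ ?_ ?_
  · intro i (hi : i < m + 1) j (hj : j < m + 1)
      (hij : p.getVert (i % (m + 1)) = p.getVert (j % (m + 1)))
    rw [hg i (by omega), hg j (by omega)] at hij
    exact hp.getVert_injOn (show i ≤ m by omega) (show j ≤ m by omega) hij
  · intro i (hi : i < m + 1) j (hj : j < m + 1) hij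
    by_cases him : i < m <;> by_cases hjm : j < m <;> simp only [him, hjm, if_true, if_false] at hij
    · refine hp.getVert_injOn.eq_of_sym2_mk_succ_eq him hjm ?_
      rw [← hf i him, ← hf j hjm, hij]
    · exact absurd hij (hfe i him)
    · exact absurd hij.symm (hfe j hjm)
    · omega
  · intro i hi
    by_cases him : i < m
    · simp only [him, if_true, hg i him.le, hg (i + 1) him, hf i him]
    · obtain rfl : i = m := by omega
      simp [he, m]

variable (hd tl x) in
def inactiveGraph : SimpleGraph V :=
  SimpleGraph.fromRel fun a b => ∃ e, x e = 0 ∧ hd e = a ∧ tl e = b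

theorem exists_eq_zero_of_inactiveGraph_adj {a b : V} (h : (inactiveGraph hd tl x).Adj a b) :
    ∃ e, x e = 0 ∧ s(hd e, tl e) = s(a, b) := by
  obtain ⟨-, ⟨e, he, rfl, rfl⟩ | ⟨e, he, rfl, rfl⟩⟩ := (SimpleGraph.fromRel_adj _ _ _).1 h
  exacts [⟨e, he, rfl⟩, ⟨e, he, Sym2.eq_swap⟩]

theorem inactiveGraph_reachable_of_eq_zero {e : E} (he : x e = 0) :
    (inactiveGraph hd tl x).Reachable (hd e) (tl e) := by
  by_cases h : hd e = tl e
  · rw [h]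
  · exact SimpleGraph.Adj.reachable
      ((SimpleGraph.fromRel_adj _ _ _).2 ⟨h, .inl ⟨e, he, rfl, rfl⟩⟩)

theorem IsMulticut.not_inactiveGraph_reachable (hm : IsMulticut hd tl x) {e : E} (he : x e = 1) :
    ¬ (inactiveGraph hd tl x).Reachable (tl e) (hd e) := by
  intro hr
  obtain ⟨p, hp⟩ := hr.exists_isPath
  have : Nonempty E := ⟨e⟩
  choose! f hf using fun i (hi : i < p.length) =>
    exists_eq_zero_of_inactiveGraph_adj (p.adj_getVert_succ hi)
  have hfe (i : ℕ) (hi : i < p.length) : f i ≠ e := fun h => by simpa [h, he] using (hf i hi).1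
  refine hm (p.length + 1) _ _ (isCycle_of_isPath hp f (fun i hi => (hf i hi).2) e rfl hfe)
    (Finset.card_eq_one.2 ⟨Fin.last p.length, ?_⟩)
  ext i
  by_cases hi : (i : ℕ) < p.length
  · simp [hi, (hf i hi).1, Fin.ext_iff, hi.ne]
  · simp [hi, he, Fin.ext_iff]
    omega

theorem IsMulticut.exists_eq_one_iff_ne [Countable V] (hm : IsMulticut hd tl x)
    (hx : ∀ e, x e = 0 ∨ x e = 1) : ∃ w : V → ℝ, ∀ e, x e = 1 ↔ w (hd e) ≠ w (tl e) := by
  obtain ⟨w, hw⟩ := (inactiveGraph hd tl x).exists_eq_iff_reachable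
  refine ⟨w, fun e => ?_⟩
  rw [Ne, hw]
  rcases hx e with h | h
  · simp [h, inactiveGraph_reachable_of_eq_zero h]
  · simpa [h] using fun hr => hm.not_inactiveGraph_reachable h hr.symm

end Multicut

/-- `S_I^o = S_m`: the set of binary edge labelings arising from some `w : V → ℝ` via
`x_e = 1 ↔ w_{h_e} ≠ w_{t_e}` equals the set of binary multicut labelings. -/
theorem stmt12 {V E : Type} [Fintype V] (hd tl : E → V) :
    {x : E → ℕ | (∀ e, x e = 0 ∨ x e = 1) ∧
        ∃ w : V → ℝ, ∀ e, x e = 1 ↔ w (hd e) ≠ w (tl e)} =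
      {x : E → ℕ | (∀ e, x e = 0 ∨ x e = 1) ∧ IsMulticut hd tl x} := by
  ext x
  constructor
  · rintro ⟨hx, w, hw⟩
    exact ⟨hx, isMulticut_of_forall_eq_one_iff_ne w hw⟩
  · rintro ⟨hx, hm⟩
    exact ⟨hx, hm.exists_eq_one_iff_ne hx⟩
end
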